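/- In a free Lie algebra over ℚ with generators T, V₁, V₂ subject to the relation [V₁,V₂] = 0, the h²-term of the shadow Hamiltonian of the integrator [e^{λhV₂} e^{(h/2)(V₁+T)} e^{(1-2λ)hV₂} e^{(h/2)(V₁+T)} e^{λhV₂}] equals ((-1+6λ-6λ²)/12)[V₂,[T,V₂]] + ((-1+6λ)/24)[V₁,[T,V₂]] + ((-1+6λ)/24)[T,[T,V₂]]. -/

import Mathlib

/-!
Modulo `h⁴` each factor is `1 + h a + h² a²/2 + h³ a³/6`, so both sides are determined by their
coefficients in degrees `≤ 3`, which are noncommutative polynomials in `T, V₁, V₂` with rational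
coefficients. Comparing them is a finite computation in which `[V₁, V₂] = 0` lets `V₁` and `V₂` be
reordered; the degree-2 coefficients agree with `(T + V₁ + V₂)² / 2` because the composition is
palindromic.
-/

open Polynomial

/-- Exponential series truncated at degree 3 (enough to determine a BCH logarithm
modulo degree ≥ 4 in `h = X`). -/
noncomputable def texp {A : Type*} [Ring A] [Algebra ℚ A] (x : Polynomial A) : Polynomial A :=
  1 + x + (1/2 : ℚ) • x^2 + (1/6 : ℚ) • x^3

section TruncatedExp

variable {A : Type*} [Ring A] [Algebra ℚ A]

lemma smul_X_mul_C (q : ℚ) (a : A) : q • (X * C a) = X * C (q • a) := by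
  rw [← smul_C, mul_smul_comm]

lemma coeff_texp_X_mul_C_add_X_pow_three_mul_C (a w : A) :
    (texp (X * C a + X ^ 3 * C w)).coeff 0 = 1 ∧
    (texp (X * C a + X ^ 3 * C w)).coeff 1 = a ∧
    (texp (X * C a + X ^ 3 * C w)).coeff 2 = (1/2 : ℚ) • (a * a) ∧
    (texp (X * C a + X ^ 3 * C w)).coeff 3 = w + (1/6 : ℚ) • (a * a * a) := by
  simp only [← monomial_zero_left, X_mul_monomial, X_pow_mul_monomial]
  refine ⟨?_, ?_, ?_, ?_⟩ <;>
  · simp only [texp, pow_succ, pow_zero, one_mul, mul_add, add_mul, monomial_mul_monomial,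
      coeff_add, coeff_smul, coeff_monomial, coeff_one]
    norm_num

lemma coeff_texp_X_mul_C (a : A) :
    (texp (X * C a)).coeff 0 = 1 ∧
    (texp (X * C a)).coeff 1 = a ∧
    (texp (X * C a)).coeff 2 = (1/2 : ℚ) • (a * a) ∧
    (texp (X * C a)).coeff 3 = (1/6 : ℚ) • (a * a * a) := by
  simpa using coeff_texp_X_mul_C_add_X_pow_three_mul_C a 0

end TruncatedExp

/-- For `T, V₁, V₂` with `[V₁,V₂] = 0`, the 5-stage nested integrator
`e^{λhV₂} e^{(h/2)(V₁+T)} e^{(1-2λ)hV₂} e^{(h/2)(V₁+T)} e^{λhV₂}` equals, modulo `h⁴`,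
`exp(h(T+V₁+V₂) + h³·(((-1+6λ-6λ²)/12)[V₂,[T,V₂]] + ((-1+6λ)/24)[V₁,[T,V₂]]
 + ((-1+6λ)/24)[T,[T,V₂]]))`; so its shadow Hamiltonian has exactly this `h²`-term. -/
theorem nested_five_stage_shadow_hamiltonian
    {A : Type*} [Ring A] [Algebra ℚ A] (T V₁ V₂ : A) (lam : ℚ)
    (hcomm : ⁅V₁, V₂⁆ = 0) :
    ∀ k : ℕ, k ≤ 3 →
      (texp (lam • (X * C V₂)) * texp ((1/2 : ℚ) • (X * C (V₁ + T)))
        * texp ((1 - 2*lam) • (X * C V₂)) * texp ((1/2 : ℚ) • (X * C (V₁ + T)))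
        * texp (lam • (X * C V₂))).coeff k
      = (texp (X * C (T + V₁ + V₂)
          + X^3 * C (((-1 + 6*lam - 6*lam^2)/12) • ⁅V₂, ⁅T, V₂⁆⁆
            + ((-1 + 6*lam)/24) • ⁅V₁, ⁅T, V₂⁆⁆
            + ((-1 + 6*lam)/24) • ⁅T, ⁅T, V₂⁆⁆))).coeff k := by
  intro k hk
  have hV : Commute V₁ V₂ := commute_iff_lie_eq.mpr hcomm
  simp only [smul_X_mul_C]
  obtain ⟨p₀, p₁, p₂, p₃⟩ := coeff_texp_X_mul_C (lam • V₂)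
  obtain ⟨q₀, q₁, q₂, q₃⟩ := coeff_texp_X_mul_C ((1/2 : ℚ) • (V₁ + T))
  obtain ⟨r₀, r₁, r₂, r₃⟩ := coeff_texp_X_mul_C ((1 - 2*lam) • V₂)
  obtain ⟨s₀, s₁, s₂, s₃⟩ := coeff_texp_X_mul_C_add_X_pow_three_mul_C (T + V₁ + V₂)
    (((-1 + 6*lam - 6*lam^2)/12) • ⁅V₂, ⁅T, V₂⁆⁆ + ((-1 + 6*lam)/24) • ⁅V₁, ⁅T, V₂⁆⁆
      + ((-1 + 6*lam)/24) • ⁅T, ⁅T, V₂⁆⁆)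
  interval_cases k <;>
    simp only [coeff_mul, Finset.Nat.sum_antidiagonal_eq_sum_range_succ_mk,
      Finset.sum_range_succ, Finset.sum_range_zero, Nat.reduceSub,
      p₀, p₁, p₂, p₃, q₀, q₁, q₂, q₃, r₀, r₁, r₂, r₃, s₀, s₁, s₂, s₃,
      one_mul, mul_one, zero_add] <;>
    simp only [Ring.lie_def, mul_add, add_mul, mul_sub, sub_mul, smul_add, smul_sub,
      smul_smul, mul_smul_comm, smul_mul_assoc, mul_assoc, hV.eq, hV.left_comm] <;>
    module
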